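/- Let k be a field with char k ≠ 2, K = k(√a) a quadratic extension with Gal(K/k) = ⟨σ⟩, and let f(x) ∈ k[x] be a polynomial of degree 1. Extend σ to K(x,y) by σ(√a) = −√a, σ(x) = x, σ(y) = f(x)/y. Then K(x,y)^⟨σ⟩ is always purely transcendental over k. -/

import Mathlib

/-!
Write `g = f(x)` and `s = √a`. Since `σ` swaps `y` and `g / y` and negates `s`, the elements
`u = y + g / y` and `v = s (y - g / y)` are `σ`-invariant. From `u² - v² / a = 4g` the field
`k(u, v)` contains `g`, hence `x`; moreover `y` is a root of `T² - uT + g` over `k(u, v)` and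
`s = v / (2y - u)`, where `2y - u = y - g / y` is nonzero because `x, y` are independent. So
`K(x, y) = k(u, v)(y)` has degree at most `2` over `k(u, v)`, and as `σ` is nontrivial and fixes
`k(u, v)`, its fixed field is exactly `k(u, v)`. Finally `K(x, y)` is algebraic over `k(u, v)`
and has transcendence degree `2` over `k`, so `u, v` are algebraically independent.
-/

/-- `L` is purely transcendental over `k` of transcendence degree `m`:
it is generated over `k` by `m` algebraically independent elements. -/
def IsRationalOfDeg (k : Type) {F : Type} [Field k] [Field F] [Algebra k F]
    (L : IntermediateField k F) (m : ℕ) : Prop :=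
  ∃ u : Fin m → F, (∀ i, u i ∈ L) ∧ AlgebraicIndependent k u ∧
    L = IntermediateField.adjoin k (Set.range u)

open IntermediateField Polynomial

namespace IntermediateField

variable {k F : Type*} [Field k] [Field F] [Algebra k F]

theorem mem_fixedField_zpowers_iff {σ : F ≃ₐ[k] F} {w : F} :
    w ∈ fixedField (Subgroup.zpowers σ) ↔ σ w = w := by
  rw [mem_fixedField_iff, Subgroup.forall_mem_zpowers]
  exact MulAction.mem_fixedBy_zpowers_iff_mem_fixedBy (g := σ) (a := w)

theorem eq_of_le_of_ne_top_of_finrank_le_two {E L : IntermediateField k F}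
    [FiniteDimensional E F] (hle : E ≤ L) (hL : L ≠ ⊤) (h : Module.finrank E F ≤ 2) : E = L := by
  by_contra hne
  have hlt := finrank_lt_of_gt (lt_of_le_of_ne hle hne)
  have hdvd := finrank_dvd_of_le_left (L := F) hle
  have hpos : 0 < Module.finrank E F := Module.finrank_pos
  have hL0 : Module.finrank L F ≠ 0 := by
    rintro h0
    rw [h0, zero_dvd_iff] at hdvd
    omega
  exact hL (finrank_eq_one_iff_eq_top.1 (by omega))

theorem fixedField_zpowers_eq_adjoin (σ : F ≃ₐ[k] F) {S : Set F}
    [FiniteDimensional (adjoin k S) F] (hS : ∀ w ∈ S, σ w = w) (hσ : ∃ w, σ w ≠ w)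
    (h : Module.finrank (adjoin k S) F ≤ 2) : fixedField (Subgroup.zpowers σ) = adjoin k S := by
  refine (eq_of_le_of_ne_top_of_finrank_le_two
    (adjoin_le_iff.2 fun w hw ↦ mem_fixedField_zpowers_iff.2 (hS w hw)) ?_ h).symm
  obtain ⟨w, hw⟩ := hσ
  exact fun htop ↦ hw (mem_fixedField_zpowers_iff.1 (htop ▸ mem_top))

theorem eq_top_of_algebraMap_image_subset {K : Type*} [Field K] [Algebra k K] [Algebra K F]
    [IsScalarTower k K F] {S : Set K} {T : Set F} {L : IntermediateField k F}
    (hS : adjoin k S = ⊤) (hT : adjoin K T = ⊤) (hSL : algebraMap K F '' S ⊆ L) (hTL : T ⊆ L) :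
    L = ⊤ := by
  have hK : Set.range (algebraMap K F) ⊆ L := by
    rintro _ ⟨κ, rfl⟩
    have hmap : (adjoin k S).map (IsScalarTower.toAlgHom k K F) ≤ L := by
      rw [adjoin_map]
      exact adjoin_le_iff.2 hSL
    exact hmap ((mem_map _).2 ⟨κ, hS ▸ mem_top, rfl⟩)
  have hle : (adjoin K T).toSubfield ≤ L.toSubfield :=
    Subfield.closure_le.2 (Set.union_subset hK hTL)
  exact eq_top_iff.2 fun z _ ↦ hle (hT ▸ mem_top : z ∈ adjoin K T)

theorem adjoin_algebraMap_mul_add_eq_top {K : Type*} [Field K] [Algebra k K] [Algebra K F]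
    [IsScalarTower k K F] {t : K} (ht : adjoin k {t} = ⊤) {x y : F} (hxy : adjoin K {x, y} = ⊤)
    {c : k} (hc : c ≠ 0) (d : k) :
    adjoin k {algebraMap K F t, algebraMap k F c * x + algebraMap k F d, y} = ⊤ := by
  set g := algebraMap k F c * x + algebraMap k F d
  have hgL : g ∈ adjoin k {algebraMap K F t, g, y} := subset_adjoin k _ (by simp)
  have hxL : x ∈ adjoin k {algebraMap K F t, g, y} := by
    have hxg : x = (g - algebraMap k F d) / algebraMap k F c := by
      field_simp [g, (_root_.map_ne_zero (algebraMap k F)).2 hc]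
      ring
    rw [hxg]
    exact div_mem (sub_mem hgL ((adjoin k _).algebraMap_mem d)) ((adjoin k _).algebraMap_mem c)
  refine eq_top_of_algebraMap_image_subset ht hxy ?_ ?_
  · simpa using subset_adjoin k {algebraMap K F t, g, y} (Set.mem_insert _ _)
  · simpa [Set.insert_subset_iff] using ⟨hxL, subset_adjoin k {algebraMap K F t, g, y} (by simp)⟩

section AdjoinSimple

variable {E : Type*} [Field E] [Algebra E F] {y : F}

theorem finiteDimensional_of_adjoin_simple_eq_top (hy : IsIntegral E y) (htop : E⟮y⟯ = ⊤) :
    FiniteDimensional E F := by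
  have := adjoin.finiteDimensional hy
  rw [htop] at this
  exact topEquiv.toLinearEquiv.finiteDimensional

theorem finrank_le_natDegree_of_adjoin_simple_eq_top {p : E[X]} (hp : p.Monic)
    (hpy : aeval y p = 0) (htop : E⟮y⟯ = ⊤) : Module.finrank E F ≤ p.natDegree := by
  rw [← finrank_top', ← htop, adjoin.finrank ⟨p, hp, hpy⟩]
  exact natDegree_le_natDegree (minpoly.min E y hp hpy)

end AdjoinSimple

end IntermediateField

theorem AlgebraicIndependent.of_isAlgebraic_adjoin {k F ι : Type*} [Field k] [Field F]
    [Algebra k F] [Finite ι] {w v : ι → F} (hw : AlgebraicIndependent k w)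
    [Algebra.IsAlgebraic (adjoin k (Set.range v)) F] : AlgebraicIndependent k v := by
  have := isAlgebraic_adjoin_iff_top.1 ‹Algebra.IsAlgebraic (adjoin k (Set.range v)) F›
  exact (Algebra.IsAlgebraic.isTranscendenceBasis_of_lift_le_trdeg_of_finite k v
    hw.lift_cardinalMk_le_trdeg).1

theorem AlgebraicIndependent.sq_ne_algebraMap_mul_add {K F : Type*} [Field K] [CommRing F]
    [Algebra K F] {x y : F} (h : AlgebraicIndependent K ![x, y]) {c : K} (hc : c ≠ 0) (d : K) :
    y ^ 2 ≠ algebraMap K F c * x + algebraMap K F d := by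
  intro hyx
  have hpoly : (MvPolynomial.X 1 ^ 2 : MvPolynomial (Fin 2) K) =
      MvPolynomial.C c * MvPolynomial.X 0 + MvPolynomial.C d :=
    h (by simpa [MvPolynomial.algebraMap_eq] using hyx)
  have h10 : (0 : K) = c + d := by simpa using congrArg (MvPolynomial.eval ![1, 0]) hpoly
  have h00 : (0 : K) = d := by simpa using congrArg (MvPolynomial.eval ![0, 0]) hpoly
  exact hc (by linear_combination -h10 + h00)

section TwistedInvolution

variable {k F : Type*} [Field k] [Field F] [Algebra k F] {s y g : F}

theorem AlgEquiv.map_div_eq_of_map_eq_div {σ : F ≃ₐ[k] F} (hg : σ g = g) (hy : σ y = g / y)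
    (hy0 : y ≠ 0) : σ (g / y) = y := by
  have hg0 : g ≠ 0 := by
    rintro rfl
    exact hy0 (σ.injective (by simpa using hy))
  rw [map_div₀, hg, hy]
  field_simp

namespace IntermediateField

variable {L : IntermediateField k F}

theorem mem_of_add_div_mem_of_mul_sub_div_mem (h2 : (2 : F) ≠ 0) (hy : y ≠ 0) (hs : s ≠ 0)
    (hs2 : s ^ 2 ∈ L) (hu : y + g / y ∈ L) (hv : s * (y - g / y) ∈ L) : g ∈ L := by
  have hg : g = ((y + g / y) ^ 2 - (s * (y - g / y)) ^ 2 / s ^ 2) / 2 / 2 := by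
    field_simp
    ring
  rw [hg]
  exact div_mem (div_mem (sub_mem (pow_mem hu 2) (div_mem (pow_mem hv 2) hs2))
    (ofNat_mem L 2)) (ofNat_mem L 2)

theorem mem_of_mul_sub_div_mem (hy : y ≠ 0) (hyg : y ^ 2 ≠ g) (hyL : y ∈ L)
    (hu : y + g / y ∈ L) (hv : s * (y - g / y) ∈ L) : s ∈ L := by
  have hne : y - g / y ≠ 0 := by
    rw [sub_ne_zero, ne_eq, eq_div_iff hy, ← sq]
    exact hyg
  have hgL : g / y ∈ L := by simpa using sub_mem hu hyL
  simpa [hne] using div_mem hv (sub_mem hyL hgL)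

theorem adjoin_simple_eq_top_of_adjoin_eq_top (hy : y ≠ 0) (hyg : y ^ 2 ≠ g)
    (hgen : adjoin k {s, g, y} = ⊤) (hu : y + g / y ∈ L) (hv : s * (y - g / y) ∈ L)
    (hg : g ∈ L) : L⟮y⟯ = ⊤ := by
  have hL : ∀ w ∈ L, w ∈ L⟮y⟯.restrictScalars k := fun w hw ↦ algebraMap_mem L⟮y⟯ ⟨w, hw⟩
  have hyL : y ∈ L⟮y⟯.restrictScalars k := mem_adjoin_simple_self L y
  rw [← restrictScalars_eq_top_iff (K := k), eq_top_iff, ← hgen, adjoin_le_iff,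
    Set.insert_subset_iff, Set.insert_subset_iff, Set.singleton_subset_iff]
  exact ⟨mem_of_mul_sub_div_mem hy hyg hyL (hL _ hu) (hL _ hv), hL g hg, hyL⟩

theorem finiteDimensional_and_finrank_le_two (hy : y ≠ 0) (hu : y + g / y ∈ L) (hg : g ∈ L)
    (htop : L⟮y⟯ = ⊤) : FiniteDimensional L F ∧ Module.finrank L F ≤ 2 := by
  let p : L[X] := X ^ 2 - C ⟨y + g / y, hu⟩ * X + C ⟨g, hg⟩
  have hp : p.Monic := by unfold p; monicity!
  have hpdeg : p.natDegree = 2 := by unfold p; compute_degree!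
  have hpy : aeval y p = 0 := by
    simp only [p, map_add, aeval_sub, map_pow, aeval_X, map_mul, aeval_C, algebraMap_apply]
    field_simp
    ring
  exact ⟨finiteDimensional_of_adjoin_simple_eq_top ⟨p, hp, hpy⟩ htop,
    hpdeg ▸ finrank_le_natDegree_of_adjoin_simple_eq_top hp hpy htop⟩

end IntermediateField

theorem isRationalOfDeg_fixedField_of_map_eq_div {k F : Type} [Field k] [Field F] [Algebra k F]
    {s y g : F} (σ : F ≃ₐ[k] F) {w : Fin 2 → F} (hw : AlgebraicIndependent k w)
    (h2 : (2 : F) ≠ 0) (hs : s ≠ 0) (hs2 : s ^ 2 ∈ (⊥ : IntermediateField k F)) (hy : y ≠ 0)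
    (hyg : y ^ 2 ≠ g) (hgen : adjoin k {s, g, y} = ⊤) (hσs : σ s = -s) (hσg : σ g = g)
    (hσy : σ y = g / y) :
    IsRationalOfDeg k (fixedField (Subgroup.zpowers σ)) 2 := by
  set u := y + g / y
  set v := s * (y - g / y)
  set E := adjoin k (Set.range ![u, v])
  have hσgy : σ (g / y) = y := σ.map_div_eq_of_map_eq_div hσg hσy hy
  have hfix : ∀ w ∈ Set.range ![u, v], σ w = w := by
    have hσu : σ u = u := by
      rw [map_add, hσgy, hσy, add_comm]
    have hσv : σ v = v := by
      rw [map_mul, map_sub, hσgy, hσy, hσs]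
      ring
    rintro _ ⟨i, rfl⟩
    fin_cases i
    exacts [hσu, hσv]
  have huE : u ∈ E := subset_adjoin k _ ⟨0, rfl⟩
  have hvE : v ∈ E := subset_adjoin k _ ⟨1, rfl⟩
  have hgE : g ∈ E :=
    mem_of_add_div_mem_of_mul_sub_div_mem h2 hy hs (SetLike.le_def.1 bot_le hs2) huE hvE
  obtain ⟨hfin, hrank⟩ := finiteDimensional_and_finrank_le_two hy huE hgE
    (adjoin_simple_eq_top_of_adjoin_eq_top hy hyg hgen huE hvE hgE)
  have hfixE : fixedField (Subgroup.zpowers σ) = E := by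
    refine fixedField_zpowers_eq_adjoin σ hfix ⟨s, ?_⟩ hrank
    rw [hσs, ne_eq, neg_eq_iff_add_eq_zero, ← two_mul]
    exact mul_ne_zero h2 hs
  have := Algebra.IsAlgebraic.of_finite E F
  exact ⟨![u, v], fun i ↦ hfixE ▸ subset_adjoin k _ ⟨i, rfl⟩, hw.of_isAlgebraic_adjoin, hfixE⟩

end TwistedInvolution

theorem stmt7_general (k K F : Type) [Field k] [Field K] [Field F]
    [Algebra k K] [Algebra K F] [Algebra k F] [IsScalarTower k K F]
    (h2 : (2 : k) ≠ 0) (a : k) (ha : a ≠ 0)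
    (sqa : K) (hsqa : sqa ^ 2 = algebraMap k K a)
    (hKgen : IntermediateField.adjoin k {sqa} = ⊤)
    (c d : k) (hc : c ≠ 0)
    (x y : F) (hind : AlgebraicIndependent K ![x, y])
    (hadj : IntermediateField.adjoin K {x, y} = ⊤)
    (σ : F ≃ₐ[k] F)
    (hσK : σ (algebraMap K F sqa) = - algebraMap K F sqa)
    (hx : σ x = x)
    (hy : σ y = (algebraMap k F c * x + algebraMap k F d) / y) :
    IsRationalOfDeg k (IntermediateField.fixedField (Subgroup.zpowers σ)) 2 := by
  set s := algebraMap K F sqa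
  set g := algebraMap k F c * x + algebraMap k F d
  have h2F : (2 : F) ≠ 0 := map_ofNat (algebraMap k F) 2 ▸ (_root_.map_ne_zero _).2 h2
  have hs2 : s ^ 2 = algebraMap k F a := by
    rw [← map_pow, hsqa, ← IsScalarTower.algebraMap_apply]
  have hs0 : s ≠ 0 := fun hs ↦ ha (by simpa [hs] using hs2.symm)
  have hyg : y ^ 2 ≠ g := by
    simpa [g, ← IsScalarTower.algebraMap_apply] using
      hind.sq_ne_algebraMap_mul_add ((_root_.map_ne_zero (algebraMap k K)).2 hc) (algebraMap k K d)
  exact isRationalOfDeg_fixedField_of_map_eq_div σ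
    (hind.restrictScalars (algebraMap k K).injective) h2F hs0
    (hs2 ▸ (⊥ : IntermediateField k F).algebraMap_mem a) (hind.ne_zero 1) hyg
    (adjoin_algebraMap_mul_add_eq_top hKgen hadj hc d) hσK (by simp [g, hx]) hy

/-- For `K = k(√a)` with `Gal(K/k) = ⟨σ⟩` extended to `K(x,y)` by `σ(x) = x`,
`σ(y) = f(x)/y` with `f(x) = cx + d` of degree 1, the fixed field `K(x,y)^⟨σ⟩`
is always purely transcendental over `k`. -/
theorem stmt7 (k K F : Type) [Field k] [Field K] [Field F]
    [Algebra k K] [Algebra K F] [Algebra k F] [IsScalarTower k K F]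
    (h2 : (2 : k) ≠ 0) (a : k) (ha : a ≠ 0)
    (hnsq : ¬∃ r : k, r ^ 2 = a)
    (sqa : K) (hsqa : sqa ^ 2 = algebraMap k K a)
    (hKgen : IntermediateField.adjoin k {sqa} = ⊤)
    (c d : k) (hc : c ≠ 0)
    (x y : F) (hind : AlgebraicIndependent K ![x, y])
    (hadj : IntermediateField.adjoin K {x, y} = ⊤)
    (σ : F ≃ₐ[k] F)
    (hσK : σ (algebraMap K F sqa) = - algebraMap K F sqa)
    (hx : σ x = x)
    (hy : σ y = (algebraMap k F c * x + algebraMap k F d) / y) :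
    IsRationalOfDeg k (IntermediateField.fixedField (Subgroup.zpowers σ)) 2 :=
  stmt7_general k K F h2 a ha sqa hsqa hKgen c d hc x y hind hadj σ hσK hx hy
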